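/- Let V be a finite-dimensional complex vector space and g, h commuting linear automorphisms of V of finite order. Then ι(g) + ι(h) − ι(gh) is a nonnegative integer, i.e. there exists n : ℕ with ι(g) + ι(h) − ι(gh) = n. -/

import Mathlib

/-- Degree shifting number of a linear automorphism of a complex vector space. -/
noncomputable def iota {V : Type*} [AddCommGroup V] [Module ℂ V] (g : V ≃ₗ[ℂ] V) : ℝ :=
  ∑ᶠ μ : ℂ, Int.fract (Complex.arg μ / (2 * Real.pi)) *
    (Module.finrank ℂ (Module.End.eigenspace (g : V →ₗ[ℂ] V) μ) : ℝ)

/-!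
Commuting automorphisms of finite order are semisimple and hence simultaneously diagonalizable.
In a common eigenbasis `ι` is the sum of the angles `θ` of the diagonal entries, and on each
eigenline with eigenvalues `α` of `g` and `β` of `h` the contribution `θ α + θ β - θ (α β)` is the
carry of the fractional addition `θ α + θ β`, that is `0` or `1`.
-/

open Module End Finset Polynomial

theorem Int.exists_nat_fract_add_fract_sub_fract_add {R : Type*} [Ring R] [LinearOrder R]
    [IsStrictOrderedRing R] [FloorRing R] (a b : R) :
    ∃ n : ℕ, fract a + fract b - fract (a + b) = n := by
  refine ⟨(⌊a + b⌋ - ⌊a⌋ - ⌊b⌋).toNat, ?_⟩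
  rw [← Int.cast_natCast, Int.toNat_of_nonneg (by linarith [le_floor_add a b])]
  push_cast
  simp only [← self_sub_floor]
  abel

theorem finsum_mul_card_fiber {ι α R : Type*} [Fintype ι] [DecidableEq α] [Semiring R]
    (φ : α → R) (c : ι → α) : ∑ᶠ a, φ a * #{i | c i = a} = ∑ i, φ (c i) := by
  rw [Finset.sum_comp, finsum_eq_sum_of_support_subset (s := univ.image c)]
  · simp_rw [nsmul_eq_mul']
  · intro a ha
    contrapose! ha
    simp_all

namespace Module.End

variable {K V : Type*} [Field K] [AddCommGroup V] [Module K V]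

theorem isSemisimple_of_isOfFinOrder [CharZero K] {f : End K V} (hf : IsOfFinOrder f) :
    f.IsSemisimple := by
  obtain ⟨n, hn, hfn⟩ := isOfFinOrder_iff_pow_eq_one.mp hf
  refine isSemisimple_of_squarefree_aeval_eq_zero (p := X ^ n - 1) ?_ ?_
  · exact (X_pow_sub_one_separable_iff.mpr (Nat.cast_ne_zero.mpr hn.ne')).squarefree
  · simp [hfn]

section Eigenbasis

variable {ι : Type*} (b : Basis ι K V) {f : End K V} {c : ι → K}

theorem repr_apply_eq_mul_of_apply_basis_eq_smul (hf : ∀ i, f (b i) = c i • b i) (x : V)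
    (i : ι) : b.repr (f x) i = c i * b.repr x i := by
  have : b.coord i ∘ₗ f = c i • b.coord i := b.ext fun j => by
    rcases eq_or_ne j i with rfl | hji
    · simp [hf]
    · simp [hf, hji]
  exact LinearMap.congr_fun this x

theorem eigenspace_eq_span_of_apply_basis_eq_smul (hf : ∀ i, f (b i) = c i • b i) (μ : K) :
    f.eigenspace μ = Submodule.span K (b '' {i | c i = μ}) := by
  ext x
  rw [mem_eigenspace_iff, b.mem_span_image, ← b.repr.injective.eq_iff, Finsupp.ext_iff,
    Set.subset_def]
  simp only [repr_apply_eq_mul_of_apply_basis_eq_smul b hf, map_smul, Finsupp.smul_apply,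
    smul_eq_mul, Finset.mem_coe, Finsupp.mem_support_iff, Set.mem_ofPred_eq]
  exact forall_congr' fun i => by rw [mul_eq_mul_right_iff, or_iff_not_imp_right]

theorem finrank_eigenspace_of_apply_basis_eq_smul [Fintype ι] [DecidableEq K]
    (hf : ∀ i, f (b i) = c i • b i) (μ : K) :
    finrank K (f.eigenspace μ) = #{i | c i = μ} := by
  rw [eigenspace_eq_span_of_apply_basis_eq_smul b hf, Set.image_eq_range,
    finrank_span_eq_card (b := fun i : {i | c i = μ} => b i)
      (b.linearIndependent.comp _ Subtype.val_injective)]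
  exact Fintype.card_subtype _

end Eigenbasis

theorem exists_basis_apply_eq_smul_of_commute [IsAlgClosed K] [FiniteDimensional K V]
    {ι : Type*} (f : ι → End K V) (hcomm : Pairwise fun i j => Commute (f i) (f j))
    (hss : ∀ i, (f i).IsSemisimple) :
    ∃ (n : ℕ) (b : Basis (Fin n) K V) (c : Fin n → ι → K), ∀ k i, f i (b k) = c k i • b k := by
  classical
  have hcomm' : ∀ i j, Commute (f i) (f j) := fun i j => by
    rcases eq_or_ne i j with rfl | hij
    exacts [Commute.refl _, hcomm hij]
  have hmax : ∀ i μ, (f i).maxGenEigenspace μ = (f i).eigenspace μ := fun i =>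
    (hss i).isFinitelySemisimple.maxGenEigenspace_eq_eigenspace
  have hint : DirectSum.IsInternal fun χ : ι → K => ⨅ i, (f i).eigenspace (χ i) := by
    simp only [← hmax]
    exact (DirectSum.isInternal_submodule_iff_iSupIndep_and_iSup_eq_top _).mpr
      ⟨independent_iInf_maxGenEigenspace_of_forall_mapsTo f fun i j μ =>
          mapsTo_maxGenEigenspace_of_comm (hcomm' j i) μ,
        iSup_iInf_maxGenEigenspace_eq_top_of_iSup_maxGenEigenspace_eq_top_of_commute f hcomm
          fun i => iSup_maxGenEigenspace_eq_top _⟩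
  let b := hint.collectedBasis fun χ => Module.finBasis K _
  have : Fintype _ := @Fintype.ofFinite _ b.linearIndependent.finite
  refine ⟨_, b.reindex (Fintype.equivFin _), fun k => ((Fintype.equivFin _).symm k).1,
    fun k i => ?_⟩
  rw [← mem_eigenspace_iff, Basis.reindex_apply]
  exact (Submodule.mem_iInf _).mp (hint.collectedBasis_mem _ _) i

end Module.End

/-- The angle `θ(z) ∈ [0, 1)` of the paper, with `z = |z| e^{2πiθ(z)}`. -/
noncomputable def fractArg (z : ℂ) : ℝ := Int.fract (Complex.arg z / (2 * Real.pi))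

theorem fractArg_mul {x y : ℂ} (hx : x ≠ 0) (hy : y ≠ 0) :
    fractArg (x * y) =
      Int.fract (Complex.arg x / (2 * Real.pi) + Complex.arg y / (2 * Real.pi)) := by
  obtain ⟨k, hk⟩ := Real.Angle.angle_eq_iff_two_pi_dvd_sub.mp
    ((Complex.arg_mul_coe_angle hx hy).trans (Real.Angle.coe_add _ _).symm)
  rw [fractArg, ← Int.fract_add_intCast (Complex.arg x / _ + _) k]
  congr 1
  field_simp
  linarith

theorem exists_nat_fractArg_add_fractArg_sub_fractArg_mul {x y : ℂ} (hx : x ≠ 0) (hy : y ≠ 0) :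
    ∃ n : ℕ, fractArg x + fractArg y - fractArg (x * y) = n := by
  rw [fractArg_mul hx hy]
  exact Int.exists_nat_fract_add_fract_sub_fract_add _ _

theorem iota_eq_sum_fractArg_of_basis {V ι : Type*} [AddCommGroup V] [Module ℂ V] [Fintype ι]
    (g : V ≃ₗ[ℂ] V) (b : Basis ι ℂ V) {c : ι → ℂ} (hg : ∀ i, g (b i) = c i • b i) :
    iota g = ∑ i, fractArg (c i) := by
  classical
  simp only [iota, finrank_eigenspace_of_apply_basis_eq_smul b hg]
  exact finsum_mul_card_fiber fractArg c

theorem iota_add_sub_iota_mul {V : Type*} [AddCommGroup V] [Module ℂ V]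
    [FiniteDimensional ℂ V] (g h : V ≃ₗ[ℂ] V)
    (hg : IsOfFinOrder g) (hh : IsOfFinOrder h) (hcomm : Commute g h) :
    ∃ n : ℕ, iota g + iota h - iota (g * h) = n := by
  let toEnd := LinearEquiv.automorphismGroup.toLinearMapMonoidHom (R := ℂ) (M := V)
  obtain ⟨n, b, c, hb⟩ := exists_basis_apply_eq_smul_of_commute ![toEnd g, toEnd h]
    (fun i j _ => by fin_cases i <;> fin_cases j <;> simp [hcomm.map toEnd, (hcomm.map toEnd).symm])
    (Fin.forall_fin_two.mpr ⟨isSemisimple_of_isOfFinOrder (toEnd.isOfFinOrder hg),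
      isSemisimple_of_isOfFinOrder (toEnd.isOfFinOrder hh)⟩)
  have hbg : ∀ k, g (b k) = c k 0 • b k := (hb · 0)
  have hbh : ∀ k, h (b k) = c k 1 • b k := (hb · 1)
  have hbgh : ∀ k, (g * h) (b k) = (c k 0 * c k 1) • b k := fun k => by
    rw [LinearEquiv.mul_apply, hbh, map_smul, hbg, smul_smul, mul_comm]
  have hne : ∀ (e : V ≃ₗ[ℂ] V) {k : Fin n} {μ : ℂ}, e (b k) = μ • b k → μ ≠ 0 :=
    fun e k μ he hμ => b.ne_zero k (e.map_eq_zero_iff.mp (by rw [he, hμ, zero_smul]))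
  rw [iota_eq_sum_fractArg_of_basis g b hbg, iota_eq_sum_fractArg_of_basis h b hbh,
    iota_eq_sum_fractArg_of_basis (g * h) b hbgh, ← sum_add_distrib, ← sum_sub_distrib]
  choose m hm using fun k =>
    exists_nat_fractArg_add_fractArg_sub_fractArg_mul (hne g (hbg k)) (hne h (hbh k))
  exact ⟨∑ k, m k, by push_cast; exact sum_congr rfl fun k _ => hm k⟩
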